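/- Let L > 0 and let u : [0,L]² → ℝ be of class C² with u_y(x,0) = 0 and u_y(x,L) = 0 for all x ∈ [0,L]. Then ∫_Ω u(x,y) · (∂ₓ⁻¹ u_yy)(x,y) dx dy = ½ ∫₀^L ((∂ₓ⁻¹ u_y)(0,y))² dy. -/

import Mathlib

open MeasureTheory Real

noncomputable section

/-- Partial derivative in `x` of `u(x,y)`. -/
def pdx (u : ℝ → ℝ → ℝ) (x y : ℝ) : ℝ := deriv (fun x' => u x' y) x

/-- Third partial derivative in `x` of `u(x,y)`. -/
def pdx3 (u : ℝ → ℝ → ℝ) (x y : ℝ) : ℝ := iteratedDeriv 3 (fun x' => u x' y) x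

/-- Partial derivative in `y` of `u(x,y)`. -/
def pdy (u : ℝ → ℝ → ℝ) (x y : ℝ) : ℝ := deriv (fun y' => u x y') y

/-- Second partial derivative in `y` of `u(x,y)`. -/
def pdy2 (u : ℝ → ℝ → ℝ) (x y : ℝ) : ℝ := iteratedDeriv 2 (fun y' => u x y') y

/-- The nonlocal operator `(∂ₓ⁻¹ w)(x,y) = -∫ₓ^L w(s,y) ds`. -/
def pxInv (L : ℝ) (w : ℝ → ℝ → ℝ) (x y : ℝ) : ℝ := -(∫ s in x..L, w s y)

/-- The adjoint nonlocal operator `((∂ₓ⁻¹)* w)(x,y) = ∫₀^x w(s,y) ds`. -/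
def pxInvStar (w : ℝ → ℝ → ℝ) (x y : ℝ) : ℝ := ∫ s in (0:ℝ)..x, w s y

/-! With `W := ∂ₓ⁻¹ u_y`, differentiating under the integral gives `∂_y W = ∂ₓ⁻¹ u_yy`, and
`W` vanishes at `y = 0` and `y = L` because `u_y` does. Integration by parts in `y` therefore
turns the left-hand side into `-∫∫ u_y W`. Since `∂ₓ W = u_y` and `W(L, y) = 0`, the `x`-integral
of `u_y W = ∂ₓ (W² / 2)` is `-W(0, y)² / 2`. -/

open Function (uncurry)

theorem intervalIntegral_intervalIntegral_swap_of_continuous {E : Type*} [NormedAddCommGroup E]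
    [NormedSpace ℝ E] {F : ℝ → ℝ → E} (hF : Continuous (uncurry F)) (a b c d : ℝ) :
    ∫ s in a..b, ∫ t in c..d, F s t = ∫ t in c..d, ∫ s in a..b, F s t :=
  intervalIntegral_intervalIntegral_swap <|
    (hF.continuousOn.integrableOn_compact (isCompact_uIcc.prod isCompact_uIcc)).mono_set
      (Set.prod_mono Set.uIoc_subset_uIcc Set.uIoc_subset_uIcc)

section PartialDerivative

variable {u : ℝ → ℝ → ℝ}

theorem pdy2_eq_pdy_pdy : pdy2 u = pdy (pdy u) := by
  ext x y
  simp [pdy2, pdy, iteratedDeriv_succ]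

theorem hasDerivAt_pdy (hu : Differentiable ℝ (uncurry u)) (x y : ℝ) :
    HasDerivAt (u x) (pdy u x y) y :=
  ((hu (x, y)).comp y ((differentiableAt_const x).prodMk differentiableAt_id)).hasDerivAt

theorem contDiff_uncurry_pdy {n : WithTop ℕ∞} (hu : ContDiff ℝ (n + 1) (uncurry u)) :
    ContDiff ℝ n (uncurry (pdy u)) := by
  have hdiff : Differentiable ℝ (uncurry u) := hu.one_of_succ.differentiable one_ne_zero
  have h : uncurry (pdy u) = fun p => fderiv ℝ (uncurry u) p (0, 1) := by
    ext ⟨x, y⟩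
    refine (hasDerivAt_pdy hdiff x y).unique ?_
    exact (hdiff (x, y)).hasFDerivAt.comp_hasDerivAt y
      ((hasDerivAt_const y x).prodMk (hasDerivAt_id y))
  rw [h]
  exact (hu.fderiv_right le_rfl).clm_apply contDiff_const

end PartialDerivative

section NonlocalOperator

variable {L : ℝ} {w w' : ℝ → ℝ → ℝ}

@[simp]
theorem pxInv_self (L : ℝ) (w : ℝ → ℝ → ℝ) (y : ℝ) : pxInv L w L y = 0 := by
  simp [pxInv]

theorem pxInv_eq_zero {x y : ℝ} (h : ∀ s ∈ Set.uIcc x L, w s y = 0) : pxInv L w x y = 0 := by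
  simp [pxInv, intervalIntegral.integral_congr h]

theorem hasDerivAt_pxInv_left {y : ℝ} (hw : Continuous fun s => w s y) (x : ℝ) :
    HasDerivAt (fun x => pxInv L w x y) (w x y) x := by
  have h := (intervalIntegral.integral_hasDerivAt_left (hw.intervalIntegrable x L)
    hw.stronglyMeasurable.stronglyMeasurableAtFilter hw.continuousAt).neg
  rwa [neg_neg] at h

theorem continuous_pxInv (hw : Continuous (uncurry w)) :
    Continuous (uncurry (pxInv L w)) := by
  have h : uncurry (pxInv L w) =
      (fun p : ℝ × ℝ => ∫ s in L..p.2, w s p.1) ∘ Prod.swap := by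
    ext ⟨x, y⟩
    simp [pxInv, intervalIntegral.integral_symm x L]
  rw [h]
  have hsw : Continuous (uncurry fun y s => w s y) := hw.comp continuous_swap
  exact (intervalIntegral.continuous_parametric_primitive_of_continuous hsw).comp continuous_swap

theorem pxInv_eq_add_integral (hw : Continuous (uncurry w)) (hw' : Continuous (uncurry w'))
    (hd : ∀ s t, HasDerivAt (w s) (w' s t) t) (x y : ℝ) :
    pxInv L w x y = pxInv L w x 0 + ∫ t in 0..y, pxInv L w' x t := by
  have hftc : ∀ s, w s y - w s 0 = ∫ t in 0..y, w' s t := fun s =>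
    (intervalIntegral.integral_eq_sub_of_hasDerivAt (fun t _ => hd s t)
      ((hw'.comp (Continuous.prodMk_right s)).intervalIntegrable 0 y)).symm
  have hint : ∀ t, IntervalIntegrable (fun s => w s t) volume x L := fun t =>
    (hw.comp (Continuous.prodMk_left t)).intervalIntegrable x L
  rw [← sub_eq_iff_eq_add']
  calc pxInv L w x y - pxInv L w x 0 = -∫ s in x..L, (w s y - w s 0) := by
        rw [intervalIntegral.integral_sub (hint y) (hint 0), pxInv, pxInv]
        ring
    _ = -∫ s in x..L, ∫ t in 0..y, w' s t := by
        rw [intervalIntegral.integral_congr fun s _ => hftc s]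
    _ = ∫ t in 0..y, pxInv L w' x t := by
        rw [intervalIntegral_intervalIntegral_swap_of_continuous hw',
          ← intervalIntegral.integral_neg]
        rfl

theorem hasDerivAt_pxInv_right (hw : Continuous (uncurry w)) (hw' : Continuous (uncurry w'))
    (hd : ∀ s t, HasDerivAt (w s) (w' s t) t) (x y : ℝ) :
    HasDerivAt (fun y => pxInv L w x y) (pxInv L w' x y) y := by
  have hc : Continuous fun t => pxInv L w' x t :=
    (continuous_pxInv hw').comp (Continuous.prodMk_right x)
  have h := (hc.integral_hasStrictDerivAt 0 y).hasDerivAt.const_add (pxInv L w x 0)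
  simpa only [← pxInv_eq_add_integral hw hw' hd x] using h

theorem integral_mul_pxInv {y : ℝ} (hw : Continuous fun s => w s y) (a : ℝ) :
    ∫ x in a..L, w x y * pxInv L w x y = -(pxInv L w a y ^ 2 / 2) := by
  have hder : ∀ x ∈ Set.uIcc a L,
      HasDerivAt (fun x => pxInv L w x y ^ 2 / 2) (w x y * pxInv L w x y) x := fun x _ => by
    refine (((hasDerivAt_pxInv_left hw x).pow 2).div_const 2).congr_deriv ?_
    push_cast
    ring
  have hcont : Continuous fun x => pxInv L w x y :=
    continuous_iff_continuousAt.2 fun x => (hasDerivAt_pxInv_left hw x).continuousAt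
  rw [intervalIntegral.integral_eq_sub_of_hasDerivAt hder
    ((hw.mul hcont).intervalIntegrable a L), pxInv_self]
  ring

end NonlocalOperator

theorem integral_mul_pxInv_pdy2 {u : ℝ → ℝ → ℝ} (hu : ContDiff ℝ 2 (uncurry u))
    {L x c d : ℝ}
    (hc : ∀ s ∈ Set.uIcc x L, pdy u s c = 0) (hd : ∀ s ∈ Set.uIcc x L, pdy u s d = 0) :
    ∫ y in c..d, u x y * pxInv L (pdy2 u) x y =
      -∫ y in c..d, pdy u x y * pxInv L (pdy u) x y := by
  have hu₁ : ContDiff ℝ 1 (uncurry (pdy u)) := contDiff_uncurry_pdy hu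
  have hu₀ : Continuous (uncurry (pdy (pdy u))) :=
    (contDiff_uncurry_pdy (n := 0) (by simpa using hu₁)).continuous
  rw [pdy2_eq_pdy_pdy, intervalIntegral.integral_mul_deriv_eq_deriv_mul
    (fun y _ => hasDerivAt_pdy (hu.differentiable two_ne_zero) x y)
    (fun y _ => hasDerivAt_pxInv_right hu₁.continuous hu₀
      (hasDerivAt_pdy (hu₁.differentiable one_ne_zero)) x y)
    ((hu₁.continuous.comp (Continuous.prodMk_right x)).intervalIntegrable c d)
    (((continuous_pxInv hu₀).comp (Continuous.prodMk_right x)).intervalIntegrable c d),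
    pxInv_eq_zero hc, pxInv_eq_zero hd]
  ring

/-- Integral identity for the nonlocal term in the spectral problem:
if `u` is `C²` with `u_y(x,0) = u_y(x,L) = 0`, then
`∫_Ω u (∂ₓ⁻¹ u_yy) dx dy = ½ ∫₀^L ((∂ₓ⁻¹ u_y)(0,y))² dy`. -/
theorem kp_spectral_nonlocal_identity (L : ℝ) (hL : 0 < L)
    (u : ℝ → ℝ → ℝ) (hu : ContDiff ℝ 2 (fun p : ℝ × ℝ => u p.1 p.2))
    (hby : ∀ x ∈ Set.Icc (0:ℝ) L, pdy u x 0 = 0 ∧ pdy u x L = 0) :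
    (∫ x in (0:ℝ)..L, ∫ y in (0:ℝ)..L, u x y * pxInv L (pdy2 u) x y)
      = (1/2) * ∫ y in (0:ℝ)..L, (pxInv L (pdy u) 0 y)^2 := by
  have hu₁ : ContDiff ℝ 1 (uncurry (pdy u)) := contDiff_uncurry_pdy hu
  have hW : Continuous (uncurry fun x y => pdy u x y * pxInv L (pdy u) x y) :=
    hu₁.continuous.mul (continuous_pxInv hu₁.continuous)
  have hby' : ∀ x ∈ Set.uIcc 0 L, ∀ s ∈ Set.uIcc x L, pdy u s 0 = 0 ∧ pdy u s L = 0 :=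
    fun x hx s hs => hby s <| by
      rw [← Set.uIcc_of_le hL.le]
      exact Set.uIcc_subset_uIcc hx Set.right_mem_uIcc hs
  calc (∫ x in (0:ℝ)..L, ∫ y in (0:ℝ)..L, u x y * pxInv L (pdy2 u) x y)
      = ∫ x in (0:ℝ)..L, -∫ y in (0:ℝ)..L, pdy u x y * pxInv L (pdy u) x y :=
        intervalIntegral.integral_congr fun x hx =>
          integral_mul_pxInv_pdy2 hu (fun s hs => (hby' x hx s hs).1) fun s hs => (hby' x hx s hs).2
    _ = -∫ y in (0:ℝ)..L, ∫ x in (0:ℝ)..L, pdy u x y * pxInv L (pdy u) x y := by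
        rw [intervalIntegral.integral_neg, intervalIntegral_intervalIntegral_swap_of_continuous hW]
    _ = -∫ y in (0:ℝ)..L, -(pxInv L (pdy u) 0 y ^ 2 / 2) := by
        congr 1
        exact intervalIntegral.integral_congr fun y _ =>
          integral_mul_pxInv (w := pdy u) (hu₁.continuous.comp (Continuous.prodMk_left y)) 0
    _ = (1/2) * ∫ y in (0:ℝ)..L, (pxInv L (pdy u) 0 y)^2 := by
        rw [intervalIntegral.integral_neg, neg_neg, intervalIntegral.integral_div]
        ring

end
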